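/- arXiv:0811.1465 — 7 statements merged into one kernel-verified Lean document; each statement's English description precedes it below -/
import Mathlib

section
/- Let D ≥ 1, d ≥ 1, let g : Fin D → Fin D → ℂ be symmetric, and let γ : Fin D → M_d(ℂ) satisfy the Clifford relations γ_μ γ_ν + γ_ν γ_μ = 2 g(μ,ν)·I_d for all μ,ν. Let p : Fin D → ℂ. In the ring of 3×3 block matrices over M_d(ℂ), define V_μ to be the block matrix whose (1,2)-block and (2,3)-block both equal γ_μ, whose (3,1)-block equals p(μ)·I_d, and whose other blocks are zero. Then for all μ,ν,ρ ∈ Fin D the threefold symmetric bracket satisfies {V_μ, V_ν, V_ρ} = 2(g(μ,ν)p(ρ) + g(μ,ρ)p(ν) + g(ν,ρ)p(μ))·I, where I is the identity 3d×3d matrix. -/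
/-!
Each `V_μ` is a weighted cyclic shift of the three blocks, so every product of three of them is
block diagonal. In each diagonal block exactly one factor contributes the central scalar `p`, and
pairing the two orders of the remaining `γ`'s turns the symmetrized sum into
`p ρ • {γ μ, γ ν} + p ν • {γ μ, γ ρ} + p μ • {γ ν, γ ρ}`, which the Clifford relations make scalar.
-/

open Matrix

theorem Matrix.cyclic_mul_cyclic_mul_cyclic {R : Type*} [NonUnitalNonAssocSemiring R]
    (a₁ a₂ a₃ b₁ b₂ b₃ c₁ c₂ c₃ : R) :
    !![0, a₁, 0; 0, 0, a₂; a₃, 0, 0] * !![0, b₁, 0; 0, 0, b₂; b₃, 0, 0] *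
        !![0, c₁, 0; 0, 0, c₂; c₃, 0, 0] =
      diagonal ![a₁ * b₂ * c₃, a₂ * b₃ * c₁, a₃ * b₁ * c₂] := by
  ext i j
  fin_cases i <;> fin_cases j <;> simp [mul_apply, Fin.sum_univ_three]

def symmBracket₃ {R : Type*} [Mul R] [Add R] (X Y Z : R) : R :=
  X * Y * Z + X * Z * Y + Y * X * Z + Y * Z * X + Z * X * Y + Z * Y * X

section Clifford

variable {ι K A : Type*} [CommRing K] [Ring A] [Algebra K A]
  {g : ι → ι → K} {γ : ι → A}

def diracBlock (γ : ι → A) (p : ι → K) (μ : ι) : Matrix (Fin 3) (Fin 3) A :=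
  !![0, γ μ, 0; 0, 0, γ μ; p μ • 1, 0, 0]

theorem smul_anticomm_add_eq_of_clifford
    (hγ : ∀ μ ν, γ μ * γ ν + γ ν * γ μ = (2 * g μ ν) • (1 : A)) (p : ι → K) (μ ν ρ : ι) :
    p ρ • (γ μ * γ ν + γ ν * γ μ) + p ν • (γ μ * γ ρ + γ ρ * γ μ) +
        p μ • (γ ν * γ ρ + γ ρ * γ ν) =
      (2 * (g μ ν * p ρ + g μ ρ * p ν + g ν ρ * p μ)) • (1 : A) := by
  simp only [hγ, smul_smul, ← add_smul]
  ring_nf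

theorem symmBracket₃_diracBlock
    (hγ : ∀ μ ν, γ μ * γ ν + γ ν * γ μ = (2 * g μ ν) • (1 : A)) (p : ι → K) (μ ν ρ : ι) :
    symmBracket₃ (diracBlock γ p μ) (diracBlock γ p ν) (diracBlock γ p ρ) =
      (2 * (g μ ν * p ρ + g μ ρ * p ν + g ν ρ * p μ)) • (1 : Matrix (Fin 3) (Fin 3) A) := by
  simp only [symmBracket₃, diracBlock, cyclic_mul_cyclic_mul_cyclic, diagonal_add,
    ← diagonal_one, ← diagonal_smul]
  congr 1
  funext i
  rw [Pi.smul_apply, ← smul_anticomm_add_eq_of_clifford hγ p μ ν ρ]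
  fin_cases i <;>
    simp only [mul_smul_comm, smul_mul_assoc, mul_one, one_mul, Fin.zero_eta, Fin.mk_one,
      Fin.reduceFinMk, Fin.isValue, cons_val_zero, cons_val_one, cons_val] <;>
    module

end Clifford

theorem cubic_bracket_dirac_blocks_general
    (D d : ℕ)
    (g : Fin D → Fin D → ℂ)
    (γ : Fin D → Matrix (Fin d) (Fin d) ℂ)
    (hγ : ∀ μ ν, γ μ * γ ν + γ ν * γ μ =
      (2 * g μ ν) • (1 : Matrix (Fin d) (Fin d) ℂ))
    (p : Fin D → ℂ)
    (V : Fin D → Matrix (Fin 3) (Fin 3) (Matrix (Fin d) (Fin d) ℂ))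
    (hV : ∀ μ, V μ = !![0, γ μ, 0; 0, 0, γ μ; p μ • 1, 0, 0]) :
    ∀ μ ν ρ : Fin D,
      V μ * V ν * V ρ + V μ * V ρ * V ν + V ν * V μ * V ρ +
      V ν * V ρ * V μ + V ρ * V μ * V ν + V ρ * V ν * V μ =
      (2 * (g μ ν * p ρ + g μ ρ * p ν + g ν ρ * p μ)) •
        (1 : Matrix (Fin 3) (Fin 3) (Matrix (Fin d) (Fin d) ℂ)) := by
  intro μ ν ρ
  obtain rfl : V = diracBlock γ p := funext hV
  exact symmBracket₃_diracBlock hγ p μ ν ρ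

/-- The cubic extension of the Poincaré algebra realized on 3×3 block matrices built
from Dirac matrices: `{V_μ, V_ν, V_ρ} = 2(g_{μν}p_ρ + g_{μρ}p_ν + g_{νρ}p_μ)·1`. -/
theorem cubic_bracket_dirac_blocks
    (D d : ℕ) (hD : 1 ≤ D) (hd : 1 ≤ d)
    (g : Fin D → Fin D → ℂ) (hg : ∀ μ ν, g μ ν = g ν μ)
    (γ : Fin D → Matrix (Fin d) (Fin d) ℂ)
    (hγ : ∀ μ ν, γ μ * γ ν + γ ν * γ μ =
      (2 * g μ ν) • (1 : Matrix (Fin d) (Fin d) ℂ))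
    (p : Fin D → ℂ)
    (V : Fin D → Matrix (Fin 3) (Fin 3) (Matrix (Fin d) (Fin d) ℂ))
    (hV : ∀ μ, V μ = !![0, γ μ, 0; 0, 0, γ μ; p μ • 1, 0, 0]) :
    ∀ μ ν ρ : Fin D,
      V μ * V ν * V ρ + V μ * V ρ * V ν + V ν * V μ * V ρ +
      V ν * V ρ * V μ + V ρ * V μ * V ν + V ρ * V ν * V μ =
      (2 * (g μ ν * p ρ + g μ ρ * p ν + g ν ρ * p μ)) •
        (1 : Matrix (Fin 3) (Fin 3) (Matrix (Fin d) (Fin d) ℂ)) :=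
  cubic_bracket_dirac_blocks_general D d g γ hγ p V hV
end

section
/- Let D ≥ 1, d ≥ 1, let g : Fin D → Fin D → ℂ be symmetric, and let Σ, Σ̃ : Fin D → M_d(ℂ) satisfy Σ_μ Σ̃_ν + Σ_ν Σ̃_μ = 2 g(μ,ν)·I_d and Σ̃_μ Σ_ν + Σ̃_ν Σ_μ = 2 g(μ,ν)·I_d for all μ,ν. Let p : Fin D → ℂ. In the ring of 3×3 block matrices over M_d(ℂ), define V⁺_μ to be the block matrix whose (1,2)-block is Σ_μ, whose (2,3)-block is Σ̃_μ, whose (3,1)-block is p(μ)·I_d, and whose other blocks are zero. Then for all μ,ν,ρ ∈ Fin D: {V⁺_μ, V⁺_ν, V⁺_ρ} = 2(g(μ,ν)p(ρ) + g(μ,ρ)p(ν) + g(ν,ρ)p(μ))·I. -/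
/-!
Each `V⁺_μ` has nonzero blocks only in the cyclic positions (1,2), (2,3), (3,1), so a product
of three of them is block diagonal, each diagonal block being a product of one `Σ`, one `Σ̃`
and one scalar `p`, in some order.
Symmetrizing over the three indices and pulling out the central scalars leaves, in every
diagonal block, sums `p_ρ (Σ_μ Σ̃_ν + Σ_ν Σ̃_μ)` or `p_ρ (Σ̃_μ Σ_ν + Σ̃_ν Σ_μ)`, which the
Clifford-type relations turn into `2 g_{μν} p_ρ`.
-/

open Matrix

def symmBracket3 {M : Type*} [Mul M] [Add M] (X Y Z : M) : M :=
  X * Y * Z + X * Z * Y + Y * X * Z + Y * Z * X + Z * X * Y + Z * Y * X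

section CyclicBlock

variable {R : Type*}

def cyclicBlock [Zero R] (a b c : R) : Matrix (Fin 3) (Fin 3) R :=
  !![0, a, 0; 0, 0, b; c, 0, 0]

theorem cyclicBlock_mul_mul [NonUnitalNonAssocSemiring R] (a₁ b₁ c₁ a₂ b₂ c₂ a₃ b₃ c₃ : R) :
    cyclicBlock a₁ b₁ c₁ * cyclicBlock a₂ b₂ c₂ * cyclicBlock a₃ b₃ c₃ =
      diagonal ![a₁ * b₂ * c₃, b₁ * c₂ * a₃, c₁ * a₂ * b₃] := by
  ext i j
  fin_cases i <;> fin_cases j <;> simp [cyclicBlock]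

end CyclicBlock

section Clifford

variable {ι K A : Type*} [CommSemiring K] [Semiring A] [Algebra K A]

theorem sum_smul_anticomm_eq {a b : ι → A} {g : ι → ι → K}
    (hab : ∀ μ ν, a μ * b ν + a ν * b μ = (2 * g μ ν) • (1 : A)) (p : ι → K) (μ ν ρ : ι) :
    p ρ • (a μ * b ν + a ν * b μ) + p ν • (a μ * b ρ + a ρ * b μ) +
        p μ • (a ν * b ρ + a ρ * b ν) =
      (2 * (g μ ν * p ρ + g μ ρ * p ν + g ν ρ * p μ)) • (1 : A) := by
  rw [hab, hab, hab, smul_smul, smul_smul, smul_smul, ← add_smul, ← add_smul]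
  congr 1
  ring

theorem symmBracket3_cyclicBlock {a b : ι → A} {g : ι → ι → K}
    (hab : ∀ μ ν, a μ * b ν + a ν * b μ = (2 * g μ ν) • (1 : A))
    (hba : ∀ μ ν, b μ * a ν + b ν * a μ = (2 * g μ ν) • (1 : A)) (p : ι → K) (μ ν ρ : ι) :
    symmBracket3 (cyclicBlock (a μ) (b μ) (p μ • 1)) (cyclicBlock (a ν) (b ν) (p ν • 1))
        (cyclicBlock (a ρ) (b ρ) (p ρ • 1)) =
      (2 * (g μ ν * p ρ + g μ ρ * p ν + g ν ρ * p μ)) • (1 : Matrix (Fin 3) (Fin 3) A) := by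
  simp only [symmBracket3, cyclicBlock_mul_mul, diagonal_add, ← diagonal_one, ← diagonal_smul]
  congr 1
  ext i
  fin_cases i
  all_goals
    simp only [Fin.zero_eta, Fin.mk_one, Fin.reduceFinMk, cons_val, Pi.smul_apply,
      mul_smul_comm, smul_mul_assoc, mul_one, one_mul]
  · rw [← sum_smul_anticomm_eq hab]
    simp only [smul_add]
    abel
  · rw [← sum_smul_anticomm_eq hba]
    simp only [smul_add]
    abel
  · rw [← sum_smul_anticomm_eq hab]
    simp only [smul_add]
    abel

end Clifford

theorem cubic_bracket_chiral_blocks_general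
    (D d : ℕ)
    (g : Fin D → Fin D → ℂ)
    (Sig SigT : Fin D → Matrix (Fin d) (Fin d) ℂ)
    (hSig : ∀ μ ν, Sig μ * SigT ν + Sig ν * SigT μ =
      (2 * g μ ν) • (1 : Matrix (Fin d) (Fin d) ℂ))
    (hSigT : ∀ μ ν, SigT μ * Sig ν + SigT ν * Sig μ =
      (2 * g μ ν) • (1 : Matrix (Fin d) (Fin d) ℂ))
    (p : Fin D → ℂ)
    (V : Fin D → Matrix (Fin 3) (Fin 3) (Matrix (Fin d) (Fin d) ℂ))
    (hV : ∀ μ, V μ = !![0, Sig μ, 0; 0, 0, SigT μ; p μ • 1, 0, 0]) :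
    ∀ μ ν ρ : Fin D,
      V μ * V ν * V ρ + V μ * V ρ * V ν + V ν * V μ * V ρ +
      V ν * V ρ * V μ + V ρ * V μ * V ν + V ρ * V ν * V μ =
      (2 * (g μ ν * p ρ + g μ ρ * p ν + g ν ρ * p μ)) •
        (1 : Matrix (Fin 3) (Fin 3) (Matrix (Fin d) (Fin d) ℂ)) := by
  intro μ ν ρ
  have hV' : ∀ μ, V μ = cyclicBlock (Sig μ) (SigT μ) (p μ • 1) := hV
  rw [hV' μ, hV' ν, hV' ρ]
  exact symmBracket3_cyclicBlock hSig hSigT p μ ν ρ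

/-- The chiral (irreducible) block realization of the cubic extension of the Poincaré
algebra: with `Σ_μ Σ̃_ν + Σ_ν Σ̃_μ = Σ̃_μ Σ_ν + Σ̃_ν Σ_μ = 2g_{μν}·1`, the matrices `V⁺_μ`
satisfy `{V⁺_μ, V⁺_ν, V⁺_ρ} = 2(g_{μν}p_ρ + g_{μρ}p_ν + g_{νρ}p_μ)·1`. -/
theorem cubic_bracket_chiral_blocks
    (D d : ℕ) (hD : 1 ≤ D) (hd : 1 ≤ d)
    (g : Fin D → Fin D → ℂ) (hg : ∀ μ ν, g μ ν = g ν μ)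
    (Sig SigT : Fin D → Matrix (Fin d) (Fin d) ℂ)
    (hSig : ∀ μ ν, Sig μ * SigT ν + Sig ν * SigT μ =
      (2 * g μ ν) • (1 : Matrix (Fin d) (Fin d) ℂ))
    (hSigT : ∀ μ ν, SigT μ * Sig ν + SigT ν * Sig μ =
      (2 * g μ ν) • (1 : Matrix (Fin d) (Fin d) ℂ))
    (p : Fin D → ℂ)
    (V : Fin D → Matrix (Fin 3) (Fin 3) (Matrix (Fin d) (Fin d) ℂ))
    (hV : ∀ μ, V μ = !![0, Sig μ, 0; 0, 0, SigT μ; p μ • 1, 0, 0]) :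
    ∀ μ ν ρ : Fin D,
      V μ * V ν * V ρ + V μ * V ρ * V ν + V ν * V μ * V ρ +
      V ν * V ρ * V μ + V ρ * V μ * V ν + V ρ * V ν * V μ =
      (2 * (g μ ν * p ρ + g μ ρ * p ν + g ν ρ * p μ)) •
        (1 : Matrix (Fin 3) (Fin 3) (Matrix (Fin d) (Fin d) ℂ)) :=
  cubic_bracket_chiral_blocks_general D d g Sig SigT hSig hSigT p V hV
end

section
/- Let R be a commutative ring, n ≥ 1, and x₁,…,x_n ∈ R. Let M ∈ M_n(R) be the matrix with M_{i,i+1} = x_i for 1 ≤ i ≤ n−1, M_{n,1} = x_n, and all other entries 0. Then Mⁿ = (x₁ x₂ ⋯ x_n) · I_n. -/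
/-!
The matrix sends the basis vector `e_i` (as a row) to `x_i e_{i+1}`, so `Mᵏ` sends `e_i` to
`x_i x_{i+1} ⋯ x_{i+k-1} e_{i+k}`. For `k = n` the index returns to `i` and the weight has run
once around the whole cycle, so it is `x₁ ⋯ x_n` for every `i`.
-/

open Finset

namespace Matrix

variable {ι R : Type*} [Fintype ι] [DecidableEq ι] [CommSemiring R]

def weightedShift (σ : ι → ι) (x : ι → R) : Matrix ι ι R :=
  of fun i j => if j = σ i then x i else 0

theorem weightedShift_pow_apply (σ : ι → ι) (x : ι → R) (k : ℕ) (i j : ι) :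
    (weightedShift σ x ^ k) i j = if j = σ^[k] i then ∏ t ∈ range k, x (σ^[t] i) else 0 := by
  induction k generalizing j with
  | zero => simp [one_apply, eq_comm]
  | succ k ih =>
    simp only [pow_succ, mul_apply, ih, ite_mul, zero_mul, sum_ite_eq', mem_univ, if_true]
    simp only [weightedShift, of_apply, mul_ite, mul_zero, prod_range_succ,
      Function.iterate_succ_apply']

theorem weightedShift_pow_eq_smul_one (σ : ι → ι) (x : ι → R) {n : ℕ} (hσ : σ^[n] = id) {c : R}
    (hx : ∀ i, ∏ t ∈ range n, x (σ^[t] i) = c) :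
    weightedShift σ x ^ n = c • 1 := by
  ext i j
  rw [weightedShift_pow_apply, hσ, hx, smul_apply, one_apply, smul_eq_mul, mul_ite, mul_one,
    mul_zero, id]
  exact if_congr eq_comm rfl rfl

end Matrix

namespace Fin

open Fin.NatCast

theorem iterate_add_one_self {n : ℕ} [NeZero n] : (· + 1 : Fin n → Fin n)^[n] = id := by
  funext i
  simp

theorem prod_range_iterate_add_one {M : Type*} [CommMonoid M] {n : ℕ} [NeZero n]
    (f : Fin n → M) (i : Fin n) : ∏ t ∈ range n, f ((· + 1)^[t] i) = ∏ j, f j := by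
  simp only [add_right_iterate_apply, nsmul_one]
  rw [← prod_univ_eq_prod_range (fun t => f (i + (t : Fin n)))]
  exact Fintype.prod_equiv (Equiv.addLeft i) _ f fun t => by simp

end Fin

theorem cyclic_weighted_shift_pow_general
    {R : Type*} [CommRing R] (n : ℕ)
    (x : Fin n → R) (M : Matrix (Fin n) (Fin n) R)
    (hM : ∀ i j : Fin n, M i j = if (j : ℕ) = ((i : ℕ) + 1) % n then x i else 0) :
    M ^ n = (∏ i, x i) • (1 : Matrix (Fin n) (Fin n) R) := by
  obtain _ | n := n
  · simp
  have hM_eq : M = Matrix.weightedShift (· + 1) x := by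
    ext i j
    simp [Matrix.weightedShift, hM, Fin.ext_iff, Fin.val_add]
  rw [hM_eq]
  exact Matrix.weightedShift_pow_eq_smul_one _ x Fin.iterate_add_one_self
    (Fin.prod_range_iterate_add_one x)

/-- Linearization of the product polynomial: the cyclic weighted shift matrix `M`
with `M_{i,i+1} = x_i` and `M_{n,1} = x_n` satisfies `Mⁿ = (x₁⋯x_n)·I`. -/
theorem cyclic_weighted_shift_pow
    {R : Type*} [CommRing R] (n : ℕ) (hn : 1 ≤ n)
    (x : Fin n → R) (M : Matrix (Fin n) (Fin n) R)
    (hM : ∀ i j : Fin n, M i j = if (j : ℕ) = ((i : ℕ) + 1) % n then x i else 0) :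
    M ^ n = (∏ i, x i) • (1 : Matrix (Fin n) (Fin n) R) :=
  cyclic_weighted_shift_pow_general n x M hM
end

section
/- Let R be an associative unital ring and let q ∈ R be a central element with 1 + q + q² = 0. Let u₁,u₂,u₃,v₁,v₂,v₃ ∈ R satisfy v_k u_i = q · u_i v_k for all i,k ∈ {1,2,3}. Set w_i = u_i + v_i. Then the threefold symmetric brackets satisfy {w₁, w₂, w₃} = {u₁, u₂, u₃} + {v₁, v₂, v₃}, i.e. Σ_{σ∈S₃} w_{σ(1)}w_{σ(2)}w_{σ(3)} = Σ_{σ∈S₃} u_{σ(1)}u_{σ(2)}u_{σ(3)} + Σ_{σ∈S₃} v_{σ(1)}v_{σ(2)}v_{σ(3)}. -/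
/-!
Expanding `(u₁ + v₁)(u₂ + v₂)(u₃ + v₃)` over all orderings, the mixed words group into
families obtained by inserting one letter into all three positions of a two-letter word.
Moving the inserted `v` leftwards (or the inserted `u` rightwards) past `k` letters of the
other kind costs a factor `qᵏ`, so each family sums to `(1 + q + q²)` times a single word,
which vanishes.
-/

section TwistedInsertion

variable {R : Type*} [Semiring R] {q a b c : R}

theorem twisted_insertion_sum_right (hqa : Commute q a)
    (hca : c * a = q * (a * c)) (hcb : c * b = q * (b * c)) :
    a * b * c + a * c * b + c * a * b = (1 + q + q ^ 2) * (a * b * c) := by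
  have h₁ : a * c * b = q * (a * b * c) := by
    rw [mul_assoc, hcb, ← mul_assoc, ← hqa.eq, mul_assoc, mul_assoc]
  have h₂ : c * a * b = q ^ 2 * (a * b * c) := by
    rw [hca, mul_assoc, mul_assoc, hcb, ← mul_assoc a, ← hqa.eq]
    simp only [mul_assoc, sq]
  rw [h₁, h₂]
  noncomm_ring

theorem twisted_insertion_sum_left (hqb : Commute q b)
    (hba : b * a = q * (a * b)) (hca : c * a = q * (a * c)) :
    a * b * c + b * a * c + b * c * a = (1 + q + q ^ 2) * (a * b * c) := by
  have h₁ : b * a * c = q * (a * b * c) := by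
    rw [hba, mul_assoc]
  have h₂ : b * c * a = q ^ 2 * (a * b * c) := by
    rw [mul_assoc, hca, ← mul_assoc, ← hqb.eq, mul_assoc, ← mul_assoc b, hba]
    simp only [mul_assoc, sq]
  rw [h₁, h₂]
  noncomm_ring

end TwistedInsertion

/-- Cancellation of mixed terms in the threefold symmetric bracket under the twisted
tensor product: if `q` is central with `1 + q + q² = 0` and `v_k u_i = q·(u_i v_k)`,
then `{u₁+v₁, u₂+v₂, u₃+v₃} = {u₁,u₂,u₃} + {v₁,v₂,v₃}`. -/
theorem twisted_sum_threefold_bracket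
    {R : Type*} [Ring R] (q : R) (hq_central : ∀ r : R, q * r = r * q)
    (hq : 1 + q + q ^ 2 = 0)
    (u v : Fin 3 → R)
    (hcomm : ∀ i k : Fin 3, v k * u i = q * (u i * v k))
    (w : Fin 3 → R) (hw : ∀ i, w i = u i + v i) :
    w 0 * w 1 * w 2 + w 0 * w 2 * w 1 + w 1 * w 0 * w 2 +
      w 1 * w 2 * w 0 + w 2 * w 0 * w 1 + w 2 * w 1 * w 0 =
    (u 0 * u 1 * u 2 + u 0 * u 2 * u 1 + u 1 * u 0 * u 2 +
      u 1 * u 2 * u 0 + u 2 * u 0 * u 1 + u 2 * u 1 * u 0) +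
    (v 0 * v 1 * v 2 + v 0 * v 2 * v 1 + v 1 * v 0 * v 2 +
      v 1 * v 2 * v 0 + v 2 * v 0 * v 1 + v 2 * v 1 * v 0) := by
  have insert_v : ∀ i j k : Fin 3,
      u i * u j * v k + u i * v k * u j + v k * u i * u j = 0 := fun i j k => by
    rw [twisted_insertion_sum_right (hq_central _) (hcomm i k) (hcomm j k), hq, zero_mul]
  have insert_u : ∀ i j k : Fin 3,
      u i * v j * v k + v j * u i * v k + v j * v k * u i = 0 := fun i j k => by
    rw [twisted_insertion_sum_left (hq_central _) (hcomm i j) (hcomm i k), hq, zero_mul]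
  simp only [hw]
  linear_combination (norm := noncomm_ring)
    insert_v 0 1 2 + insert_v 0 2 1 + insert_v 1 0 2 + insert_v 1 2 0 + insert_v 2 0 1 +
      insert_v 2 1 0 + insert_u 0 1 2 + insert_u 0 2 1 + insert_u 1 0 2 + insert_u 1 2 0 +
      insert_u 2 0 1 + insert_u 2 1 0
end

section
/- Let N ≥ 1, F ≥ 1, and let G, A, B ∈ M_N(ℂ). Let q ∈ ℂ satisfy Σ_{a=0}^{F−1} qᵃ = 0, and suppose G·A = q·(A·G). Then Σ_{a=0}^{F−1} Tr(G · Aᵃ · B · A^{F−1−a}) = 0. -/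
/-!
Commuting `G` past `Aᵃ` costs a factor `qᵃ`, and cyclicity of the trace then moves `Aᵃ` to
the end, so the `a`-th term equals `qᵃ · Tr(G·B·A^{F−1})`. The sum is therefore
`(Σ qᵃ) · Tr(G·B·A^{F−1}) = 0`.
-/

theorem mul_pow_eq_smul_pow_mul_of_mul_eq_smul {S R : Type*} [CommSemiring S] [Semiring R]
    [Algebra S R] {G A : R} {q : S} (hGA : G * A = q • (A * G)) (a : ℕ) :
    G * A ^ a = q ^ a • (A ^ a * G) := by
  induction a with
  | zero => simp
  | succ n ih =>
    rw [pow_succ, ← mul_assoc, ih, smul_mul_assoc, mul_assoc, hGA, pow_succ,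
      mul_smul_comm, smul_smul, ← mul_assoc]

namespace Matrix

variable {n R : Type*} [Fintype n] [DecidableEq n] [CommSemiring R]

theorem trace_mul_pow_mul_of_mul_eq_smul {G A : Matrix n n R} {q : R}
    (hGA : G * A = q • (A * G)) (a : ℕ) (M : Matrix n n R) :
    (G * A ^ a * M).trace = q ^ a * (G * M * A ^ a).trace := by
  rw [mul_pow_eq_smul_pow_mul_of_mul_eq_smul hGA, smul_mul_assoc, trace_smul, smul_eq_mul,
    mul_assoc, trace_mul_comm]

end Matrix

theorem graded_trace_vanishes_general
    (N F : ℕ)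
    (G A B : Matrix (Fin N) (Fin N) ℂ) (q : ℂ)
    (hq : ∑ a ∈ Finset.range F, q ^ a = 0)
    (hGA : G * A = q • (A * G)) :
    ∑ a ∈ Finset.range F, (G * A ^ a * B * A ^ (F - 1 - a)).trace = 0 := by
  have term : ∀ a ∈ Finset.range F,
      (G * A ^ a * B * A ^ (F - 1 - a)).trace = q ^ a * (G * B * A ^ (F - 1)).trace := by
    intro a ha
    have hsplit : F - 1 - a + a = F - 1 := by
      have := Finset.mem_range.mp ha
      omega
    rw [mul_assoc, Matrix.trace_mul_pow_mul_of_mul_eq_smul hGA, mul_assoc, mul_assoc,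
      ← pow_add, hsplit, ← mul_assoc]
  rw [Finset.sum_congr rfl term, ← Finset.sum_mul, hq, zero_mul]

/-- The graded-trace argument: if `Σ_{a=0}^{F−1} qᵃ = 0` and `G·A = q·(A·G)`, then
`Σ_{a=0}^{F−1} Tr(G·Aᵃ·B·A^{F−1−a}) = 0`. -/
theorem graded_trace_vanishes
    (N F : ℕ) (hN : 1 ≤ N) (hF : 1 ≤ F)
    (G A B : Matrix (Fin N) (Fin N) ℂ) (q : ℂ)
    (hq : ∑ a ∈ Finset.range F, q ^ a = 0)
    (hGA : G * A = q • (A * G)) :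
    ∑ a ∈ Finset.range F, (G * A ^ a * B * A ^ (F - 1 - a)).trace = 0 :=
  graded_trace_vanishes_general N F G A B q hq hGA
end

section
/- Let ν > −1 be a real number. On the real vector space of finitely supported functions ℕ → ℝ with standard basis (e_n)_{n∈ℕ}, define linear operators a⁺ e_n = √(n + 1 + (ν/2)(1 + (−1)ⁿ)) e_{n+1}, a⁻ e_n = √(n + (ν/2)(1 − (−1)ⁿ)) e_{n−1} (with a⁻ e₀ = 0), and R e_n = (−1)ⁿ e_n. Then these operators satisfy the R-deformed Heisenberg algebra with reflection: a⁻a⁺ − a⁺a⁻ = id + ν·R, R·a⁺ + a⁺·R = 0, R·a⁻ + a⁻·R = 0, and R² = id. -/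
/-!
With `w n = n + (ν/2)(1 - (-1)ⁿ)` (that is `n` for even and `n + ν` for odd `n`) one has
`a⁺ e_n = √(w (n+1)) e_{n+1}` and `a⁻ e_n = √(w n) e_{n-1}`. For `ν ≥ -1` all weights are
nonnegative, so the square roots multiply back: `a⁻a⁺` and `a⁺a⁻` are diagonal with
eigenvalues `w (n+1)` and `w n`, whose difference is `1 + ν (-1)ⁿ`. The anticommutation
relations only use that `a^±` shift the degree by one while `R` is the parity `(-1)ⁿ`.
-/

open Finsupp

noncomputable def deformedNumber (ν : ℝ) (n : ℕ) : ℝ :=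
  n + ν / 2 * (1 - (-1) ^ n)

theorem deformedNumber_zero (ν : ℝ) : deformedNumber ν 0 = 0 := by
  simp [deformedNumber]

theorem deformedNumber_succ (ν : ℝ) (n : ℕ) :
    deformedNumber ν (n + 1) = n + 1 + ν / 2 * (1 + (-1) ^ n) := by
  simp only [deformedNumber, pow_succ]
  push_cast
  ring

theorem deformedNumber_succ_sub (ν : ℝ) (n : ℕ) :
    deformedNumber ν (n + 1) - deformedNumber ν n = 1 + ν * (-1) ^ n := by
  rw [deformedNumber_succ, deformedNumber]
  ring

theorem deformedNumber_nonneg {ν : ℝ} (hν : -1 ≤ ν) (n : ℕ) : 0 ≤ deformedNumber ν n := by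
  rcases Nat.even_or_odd n with hn | hn
  · simp [deformedNumber, hn.neg_one_pow]
  · have : (1 : ℝ) ≤ n := by exact_mod_cast hn.pos
    simp only [deformedNumber, hn.neg_one_pow]
    linarith

section Parity

variable {𝕜 : Type*} [CommRing 𝕜]

theorem linearMap_ext_single {f g : (ℕ →₀ 𝕜) →ₗ[𝕜] (ℕ →₀ 𝕜)}
    (h : ∀ n, f (single n 1) = g (single n 1)) : f = g :=
  Finsupp.basisSingleOne.ext fun n => by simpa using h n

variable {R : (ℕ →₀ 𝕜) →ₗ[𝕜] (ℕ →₀ 𝕜)} (hR : ∀ n, R (single n 1) = (-1 : 𝕜) ^ n • single n 1)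
include hR

theorem parity_comp_self : R ∘ₗ R = LinearMap.id :=
  linearMap_ext_single fun n => by
    rw [LinearMap.comp_apply, hR, map_smul, hR, smul_smul, ← pow_add,
      Even.neg_one_pow ⟨n, rfl⟩, one_smul, LinearMap.id_apply]

theorem parity_anticomm_of_raising {A : (ℕ →₀ 𝕜) →ₗ[𝕜] (ℕ →₀ 𝕜)} {c : ℕ → 𝕜}
    (hA : ∀ n, A (single n 1) = c n • single (n + 1) 1) : R ∘ₗ A + A ∘ₗ R = 0 :=
  linearMap_ext_single fun n => by
    simp only [LinearMap.add_apply, LinearMap.comp_apply, LinearMap.zero_apply, hA, hR, map_smul,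
      pow_succ]
    module

theorem parity_anticomm_of_lowering {A : (ℕ →₀ 𝕜) →ₗ[𝕜] (ℕ →₀ 𝕜)} {c : ℕ → 𝕜}
    (hA : ∀ n, A (single n 1) = if n = 0 then 0 else c n • single (n - 1) 1) :
    R ∘ₗ A + A ∘ₗ R = 0 :=
  linearMap_ext_single fun n => by
    cases n with
    | zero => simp [hA, hR]
    | succ n =>
      simp only [LinearMap.add_apply, LinearMap.comp_apply, LinearMap.zero_apply, hA, hR,
        map_smul, if_neg n.succ_ne_zero, Nat.add_sub_cancel, pow_succ]
      module

end Parity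

section Commutator

variable {w : ℕ → ℝ} (hw : ∀ n, 0 ≤ w n) {ap am : (ℕ →₀ ℝ) →ₗ[ℝ] (ℕ →₀ ℝ)}
  (hap : ∀ n, ap (single n 1) = √(w (n + 1)) • single (n + 1) 1)
  (ham : ∀ n, am (single n 1) = if n = 0 then 0 else √(w n) • single (n - 1) 1)
include hw hap ham

theorem lowering_raising_apply_single (n : ℕ) :
    am (ap (single n 1)) = w (n + 1) • single n 1 := by
  rw [hap, map_smul, ham, if_neg n.succ_ne_zero, Nat.add_sub_cancel, smul_smul,
    Real.mul_self_sqrt (hw _)]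

theorem raising_lowering_apply_single (hw₀ : w 0 = 0) (n : ℕ) :
    ap (am (single n 1)) = w n • single n 1 := by
  cases n with
  | zero => simp [ham, hw₀]
  | succ n =>
    rw [ham, if_neg n.succ_ne_zero, map_smul, Nat.add_sub_cancel, hap, smul_smul,
      Real.mul_self_sqrt (hw _)]

theorem commutator_apply_single (hw₀ : w 0 = 0) (n : ℕ) :
    (am ∘ₗ ap - ap ∘ₗ am) (single n 1) = (w (n + 1) - w n) • single n 1 := by
  rw [LinearMap.sub_apply, LinearMap.comp_apply, LinearMap.comp_apply,
    lowering_raising_apply_single hw hap ham, raising_lowering_apply_single hw hap ham hw₀,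
    sub_smul]

end Commutator

/-- The infinite-dimensional representation of the R-deformed Heisenberg algebra with
reflection: on the basis `e_n = single n 1` of finitely supported functions ℕ → ℝ, the
operators `a⁺ e_n = √(n+1+(ν/2)(1+(−1)ⁿ)) e_{n+1}`, `a⁻ e_n = √(n+(ν/2)(1−(−1)ⁿ)) e_{n−1}`,
`R e_n = (−1)ⁿ e_n` satisfy `[a⁻,a⁺] = 1 + ν·R`, `{R,a^±} = 0`, `R² = 1`. -/
theorem rdeformed_heisenberg_representation
    (ν : ℝ) (hν : -1 < ν)
    (ap am R : (ℕ →₀ ℝ) →ₗ[ℝ] (ℕ →₀ ℝ))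
    (hap : ∀ n : ℕ, ap (Finsupp.single n 1) =
      Real.sqrt ((n : ℝ) + 1 + (ν / 2) * (1 + (-1 : ℝ) ^ n)) • Finsupp.single (n + 1) 1)
    (ham : ∀ n : ℕ, am (Finsupp.single n 1) =
      if n = 0 then 0
      else Real.sqrt ((n : ℝ) + (ν / 2) * (1 - (-1 : ℝ) ^ n)) • Finsupp.single (n - 1) 1)
    (hR : ∀ n : ℕ, R (Finsupp.single n 1) = ((-1 : ℝ) ^ n) • Finsupp.single n 1) :
    am ∘ₗ ap - ap ∘ₗ am =
      (LinearMap.id : (ℕ →₀ ℝ) →ₗ[ℝ] (ℕ →₀ ℝ)) + ν • R ∧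
    R ∘ₗ ap + ap ∘ₗ R = 0 ∧
    R ∘ₗ am + am ∘ₗ R = 0 ∧
    R ∘ₗ R = (LinearMap.id : (ℕ →₀ ℝ) →ₗ[ℝ] (ℕ →₀ ℝ)) := by
  have hap' : ∀ n, ap (single n 1) = √(deformedNumber ν (n + 1)) • single (n + 1) 1 :=
    fun n => by rw [deformedNumber_succ, hap]
  have hw := deformedNumber_nonneg hν.le
  refine ⟨linearMap_ext_single fun n => ?_, parity_anticomm_of_raising hR hap',
    parity_anticomm_of_lowering hR ham, parity_comp_self hR⟩
  rw [commutator_apply_single hw hap' ham (deformedNumber_zero ν), deformedNumber_succ_sub,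
    LinearMap.add_apply, LinearMap.smul_apply, hR, LinearMap.id_apply, add_smul, mul_smul,
    one_smul]
end

section
/- Let R be a commutative ring in which 2 is invertible, let A be an associative unital R-algebra, ν ∈ R, and let a⁺, a⁻, ρ ∈ A satisfy a⁻a⁺ − a⁺a⁻ = 1 + ν·ρ, ρ·a⁺ + a⁺·ρ = 0, ρ·a⁻ + a⁻·ρ = 0, and ρ² = 1. Define L₊ = ½(a⁺)², L₋ = ½(a⁻)², and L₀ = ¼(a⁺a⁻ + a⁻a⁺). Then: [L₀, a⁺] = ½a⁺, [L₀, a⁻] = −½a⁻, [L₊, a⁻] = −a⁺, [L₋, a⁺] = a⁻, [L₀, L₊] = L₊, [L₀, L₋] = −L₋, and [L₊, L₋] = −2L₀. -/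
/-!
The reflection `ρ` anticommutes with `a^±`, so the commutator `c = [a⁻, a⁺] = 1 + νρ` satisfies
`c a^± + a^± c = 2 a^±`. Since `[a⁺a⁻ + a⁻a⁺, a⁺] = [a⁻, (a⁺)²] = c a⁺ + a⁺ c`, and symmetrically
for `a⁻`, this says that `a^±` satisfy the para-Bose relations `[{a⁺, a⁻}, a^±] = ±2 a^±`.
These alone imply the `osp(1|2)` relations: by the Leibniz rule for the commutator, every bracket
involving the quadratic elements `(a^±)²` and `{a⁺, a⁻}` reduces to them.
-/

section InvOfTwo

variable {R M : Type*} [Semiring R] [Invertible (2 : R)] [AddCommMonoid M] [Module R M]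

theorem invOf_two_smul_two_nsmul (x : M) : (⅟2 : R) • (2 • x) = x := by
  rw [two_nsmul, smul_add, invOf_two_smul_add_invOf_two_smul]

theorem two_nsmul_invOf_two_smul (x : M) : 2 • (⅟2 : R) • x = x := by
  rw [smul_comm, invOf_two_smul_two_nsmul]

end InvOfTwo

section Commutator

attribute [local instance] LieRing.ofAssociativeRing

variable {A : Type*} [Ring A]

namespace Ring

theorem lie_mul (x y z : A) : ⁅x, y * z⁆ = ⁅x, y⁆ * z + y * ⁅x, z⁆ := by
  simp only [LieRing.of_associative_ring_bracket, sub_mul, mul_sub, mul_assoc, sub_add_sub_cancel]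

theorem lie_mul_add_mul_left (x y : A) : ⁅x * y + y * x, x⁆ = ⁅y, x ^ 2⁆ := by
  simp only [LieRing.of_associative_ring_bracket, pow_two, add_mul, mul_add, mul_assoc]
  abel

theorem lie_sq (x y : A) : ⁅x, y ^ 2⁆ = ⁅x, y⁆ * y + y * ⁅x, y⁆ := by
  rw [pow_two, lie_mul]

end Ring

/-- Green's para-Bose relations for a single mode. -/
structure IsParabose (ap am : A) : Prop where
  lie_creation : ⁅ap * am + am * ap, ap⁆ = 2 • ap
  lie_annihilation : ⁅ap * am + am * ap, am⁆ = -(2 • am)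

theorem one_add_smul_mul_add_mul_one_add_smul {R : Type*} [Monoid R] [DistribMulAction R A]
    [IsScalarTower R A A] [SMulCommClass R A A] (ν : R) {x ρ : A} (hx : ρ * x + x * ρ = 0) :
    (1 + ν • ρ) * x + x * (1 + ν • ρ) = 2 • x := by
  rw [add_mul, mul_add, one_mul, mul_one, smul_mul_assoc, mul_smul_comm, add_add_add_comm,
    ← smul_add, hx, smul_zero, add_zero, two_nsmul]

theorem isParabose_of_lie_eq_one_add_smul {R : Type*} [Monoid R] [DistribMulAction R A]
    [IsScalarTower R A A] [SMulCommClass R A A] (ν : R) {ap am ρ : A}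
    (h : ⁅am, ap⁆ = 1 + ν • ρ) (hp : ρ * ap + ap * ρ = 0) (hm : ρ * am + am * ρ = 0) :
    IsParabose ap am where
  lie_creation := by
    rw [Ring.lie_mul_add_mul_left, Ring.lie_sq, h, one_add_smul_mul_add_mul_one_add_smul ν hp]
  lie_annihilation := by
    rw [add_comm, Ring.lie_mul_add_mul_left, Ring.lie_sq, ← lie_skew, h, neg_mul, mul_neg,
      ← neg_add, one_add_smul_mul_add_mul_one_add_smul ν hm]

namespace IsParabose

variable {ap am : A}

theorem lie_sq_creation (h : IsParabose ap am) : ⁅ap ^ 2, am⁆ = -(2 • ap) := by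
  rw [← lie_skew, ← Ring.lie_mul_add_mul_left, h.lie_creation]

theorem lie_sq_annihilation (h : IsParabose ap am) : ⁅am ^ 2, ap⁆ = 2 • am := by
  rw [← lie_skew, ← Ring.lie_mul_add_mul_left, add_comm, h.lie_annihilation, neg_neg]

theorem lie_sq_creation_sq_annihilation (h : IsParabose ap am) :
    ⁅ap ^ 2, am ^ 2⁆ = -(2 • (ap * am + am * ap)) := by
  rw [Ring.lie_sq, h.lie_sq_creation, neg_mul, mul_neg, smul_mul_assoc, mul_smul_comm, ← neg_add,
    ← smul_add]

theorem lie_anticomm_sq_creation (h : IsParabose ap am) :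
    ⁅ap * am + am * ap, ap ^ 2⁆ = 2 • 2 • ap ^ 2 := by
  rw [Ring.lie_sq, h.lie_creation, smul_mul_assoc, mul_smul_comm, ← two_nsmul, pow_two]

theorem lie_anticomm_sq_annihilation (h : IsParabose ap am) :
    ⁅ap * am + am * ap, am ^ 2⁆ = -(2 • 2 • am ^ 2) := by
  rw [Ring.lie_sq, h.lie_annihilation, neg_mul, mul_neg, smul_mul_assoc, mul_smul_comm, ← neg_add,
    ← two_nsmul, pow_two]

theorem osp12_relations {R : Type*} [CommRing R] [Invertible (2 : R)] [Algebra R A]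
    (h : IsParabose ap am) :
    ∀ Lp Lm L0 : A,
      Lp = (⅟2 : R) • ap ^ 2 →
      Lm = (⅟2 : R) • am ^ 2 →
      L0 = ((⅟2 : R) * (⅟2 : R)) • (ap * am + am * ap) →
      (L0 * ap - ap * L0 = (⅟2 : R) • ap ∧
       L0 * am - am * L0 = -((⅟2 : R) • am) ∧
       Lp * am - am * Lp = -ap ∧
       Lm * ap - ap * Lm = am ∧
       L0 * Lp - Lp * L0 = Lp ∧
       L0 * Lm - Lm * L0 = -Lm ∧
       Lp * Lm - Lm * Lp = -(2 • L0)) := by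
  rintro Lp Lm L0 rfl rfl rfl
  refine ⟨?_, ?_, ?_, ?_, ?_, ?_, ?_⟩ <;>
  simp only [← LieRing.of_associative_ring_bracket, smul_lie, LieAlgebra.lie_smul, h.lie_creation,
    h.lie_annihilation, h.lie_sq_creation, h.lie_sq_annihilation, h.lie_anticomm_sq_creation,
    h.lie_anticomm_sq_annihilation, h.lie_sq_creation_sq_annihilation, smul_neg, mul_smul,
    invOf_two_smul_two_nsmul, two_nsmul_invOf_two_smul]

end IsParabose

end Commutator

theorem rdeformed_heisenberg_osp12_general
    {R : Type*} [CommRing R] [Invertible (2 : R)]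
    {A : Type*} [Ring A] [Algebra R A]
    (ν : R) (ap am ρ : A)
    (h1 : am * ap - ap * am = 1 + ν • ρ)
    (h2 : ρ * ap + ap * ρ = 0)
    (h3 : ρ * am + am * ρ = 0) :
    ∀ Lp Lm L0 : A,
      Lp = (⅟2 : R) • ap ^ 2 →
      Lm = (⅟2 : R) • am ^ 2 →
      L0 = ((⅟2 : R) * (⅟2 : R)) • (ap * am + am * ap) →
      (L0 * ap - ap * L0 = (⅟2 : R) • ap ∧
       L0 * am - am * L0 = -((⅟2 : R) • am) ∧
       Lp * am - am * Lp = -ap ∧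
       Lm * ap - ap * Lm = am ∧
       L0 * Lp - Lp * L0 = Lp ∧
       L0 * Lm - Lm * L0 = -Lm ∧
       Lp * Lm - Lm * Lp = -(2 • L0)) :=
  (isParabose_of_lie_eq_one_add_smul ν h1 h2 h3).osp12_relations

/-- The generators `a⁺, a⁻, ρ` of the R-deformed Heisenberg algebra with reflection
realize osp(1|2): with `L₊ = ½(a⁺)²`, `L₋ = ½(a⁻)²`, `L₀ = ¼(a⁺a⁻ + a⁻a⁺)`, one has
`[L₀,a^±] = ±½a^±`, `[L₊,a⁻] = −a⁺`, `[L₋,a⁺] = a⁻`, `[L₀,L±] = ±L±`, `[L₊,L₋] = −2L₀`. -/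
theorem rdeformed_heisenberg_osp12
    {R : Type*} [CommRing R] [Invertible (2 : R)]
    {A : Type*} [Ring A] [Algebra R A]
    (ν : R) (ap am ρ : A)
    (h1 : am * ap - ap * am = 1 + ν • ρ)
    (h2 : ρ * ap + ap * ρ = 0)
    (h3 : ρ * am + am * ρ = 0)
    (h4 : ρ ^ 2 = 1) :
    ∀ Lp Lm L0 : A,
      Lp = (⅟2 : R) • ap ^ 2 →
      Lm = (⅟2 : R) • am ^ 2 →
      L0 = ((⅟2 : R) * (⅟2 : R)) • (ap * am + am * ap) →
      (L0 * ap - ap * L0 = (⅟2 : R) • ap ∧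
       L0 * am - am * L0 = -((⅟2 : R) • am) ∧
       Lp * am - am * Lp = -ap ∧
       Lm * ap - ap * Lm = am ∧
       L0 * Lp - Lp * L0 = Lp ∧
       L0 * Lm - Lm * L0 = -Lm ∧
       Lp * Lm - Lm * Lp = -(2 • L0)) :=
  rdeformed_heisenberg_osp12_general ν ap am ρ h1 h2 h3
end
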